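/- arXiv:2009.11991 — 13 statements merged into one kernel-verified Lean document; each statement's English description precedes it below -/
import Mathlib

section
/- Let A be an n×n real matrix, β ∈ ℝ, and define the iteration S_1 = A Aᵀ + Aᵀ A, S_{k+1} = A(I_n + β² S_k)Aᵀ + Aᵀ(I_n + β² S_k)A for k ≥ 1. Then for every k ≥ 1, the column space of S_k equals the column space of the compound matrix [A Aᵀ], and consequently rank(S_k) = rank([A Aᵀ]) for all k ≥ 1. -/
/-!
`Γ_A[P] = A P Aᵀ + Aᵀ P A` equals `M D Mᵀ` with `M = [A Aᵀ]` and `D = diag(P, P)`. If `P` is positive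
definite, so is `D`, and the quadratic form of `M D Mᵀ` vanishes only on `ker Mᵀ`; hence `M D Mᵀ`
has the kernel of `Mᵀ`, so the rank of `M`, and as its range lies in that of `M`, the range of `M`.
Inductively every `S_k` is positive semidefinite, so `S_1 = Γ_A[I]` and `S_{k+1} = Γ_A[I + β² S_k]`
are of this form.
-/

open Matrix

namespace Matrix

variable {m n l : Type*} {R : Type*}

theorem fromCols_mul_fromBlocks_zero_mul_conjTranspose [Fintype n] [Fintype l] [Semiring R]
    [StarRing R] (B : Matrix m n R) (C : Matrix m l R) (P : Matrix n n R) (Q : Matrix l l R) :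
    fromCols B C * fromBlocks P 0 0 Q * (fromCols B C)ᴴ = B * P * Bᴴ + C * Q * Cᴴ := by
  simp [fromCols_mul_fromBlocks, conjTranspose_fromCols_eq_fromRows_conjTranspose,
    fromCols_mul_fromRows]

section CommRing

variable [Fintype m] [Fintype n] [CommRing R] [PartialOrder R] [StarRing R]

theorem PosDef.fromBlocks_zero [StarOrderedRing R] {P : Matrix m m R} {Q : Matrix n n R}
    (hP : P.PosDef) (hQ : Q.PosDef) : (fromBlocks P 0 0 Q).PosDef := by
  refine .of_dotProduct_mulVec_pos (hP.isHermitian.fromBlocks (by simp) hQ.isHermitian)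
    fun x hx => ?_
  obtain ⟨u, v, rfl⟩ : ∃ u v, x = Sum.elim u v := ⟨_, _, (Sum.elim_comp_inl_inr x).symm⟩
  simp only [fromBlocks_mulVec, Function.star_sumElim, sumElim_dotProduct_sumElim,
    Sum.elim_comp_inl, Sum.elim_comp_inr, zero_mulVec, add_zero, zero_add]
  have hu := hP.posSemidef.dotProduct_mulVec_nonneg u
  have hv := hQ.posSemidef.dotProduct_mulVec_nonneg v
  by_cases hu0 : u = 0
  · have hv0 : v ≠ 0 := by rintro rfl; simp [hu0] at hx
    exact add_pos_of_nonneg_of_pos hu (hQ.dotProduct_mulVec_pos hv0)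
  · exact add_pos_of_pos_of_nonneg (hP.dotProduct_mulVec_pos hu0) hv

theorem ker_mulVecLin_mul_mul_conjTranspose {D : Matrix n n R} (hD : D.PosDef)
    (M : Matrix m n R) :
    LinearMap.ker (M * D * Mᴴ).mulVecLin = LinearMap.ker Mᴴ.mulVecLin := by
  ext x
  simp only [LinearMap.mem_ker, mulVecLin_apply]
  refine ⟨fun hx => ?_, fun hx => by rw [← mulVec_mulVec, hx, mulVec_zero]⟩
  by_contra hne
  have hform : star (Mᴴ *ᵥ x) ⬝ᵥ (D *ᵥ (Mᴴ *ᵥ x)) = star x ⬝ᵥ ((M * D * Mᴴ) *ᵥ x) := by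
    rw [star_mulVec, conjTranspose_conjTranspose, ← dotProduct_mulVec, ← mulVec_mulVec,
      mulVec_mulVec]
  exact (hD.dotProduct_mulVec_pos hne).ne' (by rw [hform, hx, dotProduct_zero])

end CommRing

section Field

variable [Fintype m] [Fintype n] [Field R] [PartialOrder R] [StarRing R] [StarOrderedRing R]

theorem range_mulVecLin_mul_mul_conjTranspose {D : Matrix n n R} (hD : D.PosDef)
    (M : Matrix m n R) :
    LinearMap.range (M * D * Mᴴ).mulVecLin = LinearMap.range M.mulVecLin := by
  have hle : LinearMap.range (M * D * Mᴴ).mulVecLin ≤ LinearMap.range M.mulVecLin := by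
    rw [Matrix.mul_assoc, mulVecLin_mul]
    exact LinearMap.range_comp_le_range _ _
  refine Submodule.eq_of_le_of_finrank_le hle ?_
  have hMD := LinearMap.finrank_range_add_finrank_ker (M * D * Mᴴ).mulVecLin
  have hM := LinearMap.finrank_range_add_finrank_ker Mᴴ.mulVecLin
  have hrank : Mᴴ.rank = M.rank := rank_conjTranspose M
  rw [ker_mulVecLin_mul_mul_conjTranspose hD] at hMD
  rw [rank, rank] at hrank
  omega

theorem range_mulVecLin_add_mul_mul_conjTranspose [Fintype l] {P : Matrix n n R}
    {Q : Matrix l l R} (hP : P.PosDef) (hQ : Q.PosDef) (B : Matrix m n R) (C : Matrix m l R) :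
    LinearMap.range (B * P * Bᴴ + C * Q * Cᴴ).mulVecLin
      = LinearMap.range (fromCols B C).mulVecLin := by
  rw [← fromCols_mul_fromBlocks_zero_mul_conjTranspose,
    range_mulVecLin_mul_mul_conjTranspose (hP.fromBlocks_zero hQ)]

end Field

def gamma [Fintype n] [Semiring R] (A X : Matrix n n R) : Matrix n n R :=
  A * X * Aᵀ + Aᵀ * X * A

section TrivialStar

variable [Fintype n] [Field R] [PartialOrder R] [StarRing R] [StarOrderedRing R] [TrivialStar R]

theorem PosSemidef.gamma {P : Matrix n n R} (hP : P.PosSemidef) (A : Matrix n n R) :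
    (gamma A P).PosSemidef := by
  simpa [Matrix.gamma, conjTranspose_eq_transpose_of_trivial] using
    (hP.mul_mul_conjTranspose_same A).add (hP.mul_mul_conjTranspose_same Aᵀ)

theorem range_mulVecLin_gamma {P : Matrix n n R} (hP : P.PosDef) (A : Matrix n n R) :
    LinearMap.range (gamma A P).mulVecLin = LinearMap.range (fromCols A Aᵀ).mulVecLin := by
  simpa [Matrix.gamma, conjTranspose_eq_transpose_of_trivial] using
    range_mulVecLin_add_mul_mul_conjTranspose hP hP A Aᵀ

end TrivialStar

end Matrix

/-- For the similarity iteration `S₁ = A Aᵀ + Aᵀ A`,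
`S_{k+1} = A(I + β² S_k)Aᵀ + Aᵀ(I + β² S_k)A`, every `S_k` (`k ≥ 1`) has column space
equal to that of the compound matrix `[A Aᵀ]`, and hence `rank S_k = rank [A Aᵀ]`. -/
theorem colSpace_Sk_eq_colSpace_compound (n : ℕ) (A : Matrix (Fin n) (Fin n) ℝ) (β : ℝ)
    (S : ℕ → Matrix (Fin n) (Fin n) ℝ)
    (hS1 : S 1 = A * Aᵀ + Aᵀ * A)
    (hSk : ∀ k, 1 ≤ k →
      S (k + 1) = A * (1 + β ^ 2 • S k) * Aᵀ + Aᵀ * (1 + β ^ 2 • S k) * A) :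
    ∀ k, 1 ≤ k →
      LinearMap.range (S k).mulVecLin
          = LinearMap.range (Matrix.fromCols A Aᵀ).mulVecLin ∧
      (S k).rank = (Matrix.fromCols A Aᵀ).rank := by
  have hform : ∀ k, 1 ≤ k → ∃ P : Matrix (Fin n) (Fin n) ℝ, P.PosDef ∧ S k = gamma A P := by
    intro k hk
    induction k, hk using Nat.le_induction with
    | base => exact ⟨1, PosDef.one, by simp [gamma, hS1]⟩
    | succ k hk ih =>
      obtain ⟨P, hP, hSP⟩ := ih
      have hSk_psd : (S k).PosSemidef := hSP ▸ hP.posSemidef.gamma A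
      exact ⟨_, PosDef.one.add_posSemidef (hSk_psd.smul (sq_nonneg β)), hSk k hk⟩
  intro k hk
  obtain ⟨P, hP, hSP⟩ := hform k hk
  have hrange := hSP ▸ range_mulVecLin_gamma hP A
  exact ⟨hrange, by rw [rank, rank, hrange]⟩
end

section
/- Let A be an n×n real matrix, β ∈ ℝ, and define the iteration S_1 = A Aᵀ + Aᵀ A, S_{k+1} = A(I_n + β² S_k)Aᵀ + Aᵀ(I_n + β² S_k)A for k ≥ 1. Then each S_k is symmetric positive semidefinite, and for every k ≥ 1 the matrix S_k − S_1 is positive semidefinite (i.e., S_k ⪰ S_1 in the Loewner order). -/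
open Matrix

/-!
Γ_A sends positive semidefinite matrices to positive semidefinite ones, being a sum of
congruences `X ↦ B X Bᵀ`, and it is additive. Since `S₁ = Γ_A[I]`, the recursion reads
`S_{k+1} = S₁ + Γ_A[β² S_k]`, so by induction every `S_k` is positive semidefinite, and then
`S_{k+1} - S₁ = Γ_A[β² S_k]` is too.
-/

namespace Matrix

variable {m R : Type*} [Fintype m] [CommRing R]

def gammaMap (A X : Matrix m m R) : Matrix m m R := A * X * Aᵀ + Aᵀ * X * A

theorem gammaMap_add (A X Y : Matrix m m R) :
    gammaMap A (X + Y) = gammaMap A X + gammaMap A Y := by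
  simp only [gammaMap, mul_add, add_mul]
  abel

theorem gammaMap_one [DecidableEq m] (A : Matrix m m R) : gammaMap A 1 = A * Aᵀ + Aᵀ * A := by
  simp [gammaMap]

variable [PartialOrder R] [StarRing R] [TrivialStar R]

theorem PosSemidef.mul_mul_transpose_same {X : Matrix m m R} (hX : X.PosSemidef)
    (B : Matrix m m R) : (B * X * Bᵀ).PosSemidef := by
  simpa only [conjTranspose_eq_transpose_of_trivial] using hX.mul_mul_conjTranspose_same B

theorem PosSemidef.gammaMap [StarOrderedRing R] {X : Matrix m m R} (hX : X.PosSemidef)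
    (A : Matrix m m R) : (gammaMap A X).PosSemidef := by
  have hAt : (Aᵀ * X * Aᵀᵀ).PosSemidef := hX.mul_mul_transpose_same Aᵀ
  rw [transpose_transpose] at hAt
  exact (hX.mul_mul_transpose_same A).add hAt

end Matrix

/-- Every iterate `S_k` (`k ≥ 1`) of the similarity iteration is symmetric
positive semidefinite, and `S_k − S₁` is positive semidefinite (`S_k ⪰ S₁` in the
Loewner order). -/
theorem Sk_posSemidef_and_loewner_ge_S1 (n : ℕ) (A : Matrix (Fin n) (Fin n) ℝ) (β : ℝ)
    (S : ℕ → Matrix (Fin n) (Fin n) ℝ)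
    (hS1 : S 1 = A * Aᵀ + Aᵀ * A)
    (hSk : ∀ k, 1 ≤ k →
      S (k + 1) = A * (1 + β ^ 2 • S k) * Aᵀ + Aᵀ * (1 + β ^ 2 • S k) * A) :
    ∀ k, 1 ≤ k → (S k).PosSemidef ∧ (S k - S 1).PosSemidef := by
  have hS1_gamma : S 1 = gammaMap A 1 := by rw [hS1, gammaMap_one]
  have hstep : ∀ k, 1 ≤ k → S (k + 1) = S 1 + gammaMap A (β ^ 2 • S k) := by
    intro k hk
    rw [hSk k hk, hS1_gamma, ← gammaMap_add, gammaMap]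
  have hS1psd : (S 1).PosSemidef := hS1_gamma ▸ PosSemidef.one.gammaMap A
  have hpsd : ∀ k, 1 ≤ k → (S k).PosSemidef := by
    intro k hk
    induction k, hk using Nat.le_induction with
    | base => exact hS1psd
    | succ k hk ih => exact hstep k hk ▸ hS1psd.add ((ih.smul (sq_nonneg β)).gammaMap A)
  intro k hk
  refine ⟨hpsd k hk, ?_⟩
  obtain _ | _ | k := k
  · omega
  · simpa using PosSemidef.zero
  · rw [hstep (k + 1) (by omega), add_sub_cancel_left]
    exact ((hpsd (k + 1) (by omega)).smul (sq_nonneg β)).gammaMap A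
end

section
/- Let A = (PZ)B(PZ)ᵀ be an ideal adjacency matrix, where P is an n×n permutation matrix, B is a q×q real matrix, and Z = Diag{z_1, …, z_q} ∈ ℝ^{n×q} is block diagonal with z_i the all-ones column vector of length n_i ≥ 1 and n = n_1 + ⋯ + n_q. Let β ∈ ℝ and define S_1 = A Aᵀ + Aᵀ A, S_{k+1} = A(I_n + β² S_k)Aᵀ + Aᵀ(I_n + β² S_k)A. Then for every k ≥ 1 the column space of S_k is contained in the column space of PZ, and hence rank(S_k) ≤ q. -/
/-!
Both `A = W B Wᵀ` and `Aᵀ = W Bᵀ Wᵀ` (with `W = PZ`) have `W` as their leftmost factor, and so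
does every term `A Y Aᵀ` and `Aᵀ Y A` of the recursion, whatever `Y` is. Hence the column space of
each `S_k` lies in that of `W`, which has `q` columns.
-/

open Matrix

namespace Matrix

variable {R l m n : Type*} [CommSemiring R] [Fintype m] [Fintype n]

theorem range_mulVecLin_mul_le (M : Matrix l m R) (N : Matrix m n R) :
    LinearMap.range (M * N).mulVecLin ≤ LinearMap.range M.mulVecLin := by
  rw [mulVecLin_mul]
  exact LinearMap.range_comp_le_range _ _

theorem range_mulVecLin_add_le (M N : Matrix l m R) :
    LinearMap.range (M + N).mulVecLin ≤
      LinearMap.range M.mulVecLin ⊔ LinearMap.range N.mulVecLin := by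
  rw [mulVecLin_add]
  exact LinearMap.range_add_le _ _

theorem range_mulVecLin_mul_mul_transpose_add_le {W : Matrix n m R} {B : Matrix m m R}
    {A : Matrix n n R} (hA : A = W * B * Wᵀ) (Y : Matrix n n R) :
    LinearMap.range (A * Y * Aᵀ + Aᵀ * Y * A).mulVecLin ≤ LinearMap.range W.mulVecLin := by
  have hAt : Aᵀ = W * Bᵀ * Wᵀ := by
    rw [hA, transpose_mul, transpose_mul, transpose_transpose, Matrix.mul_assoc]
  have hleft : A * Y * Aᵀ = W * (B * Wᵀ * Y * Aᵀ) := by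
    rw [hA]; simp only [Matrix.mul_assoc]
  have hright : Aᵀ * Y * A = W * (Bᵀ * Wᵀ * Y * A) := by
    rw [hAt]; simp only [Matrix.mul_assoc]
  refine (range_mulVecLin_add_le _ _).trans (sup_le ?_ ?_)
  · rw [hleft]; exact range_mulVecLin_mul_le _ _
  · rw [hright]; exact range_mulVecLin_mul_le _ _

end Matrix

theorem ideal_colSpace_Sk_le_colSpace_PZ_general (q : ℕ) (m : Fin q → ℕ)
    (P : Matrix ((i : Fin q) × Fin (m i)) ((i : Fin q) × Fin (m i)) ℝ)
    (Z : Matrix ((i : Fin q) × Fin (m i)) (Fin q) ℝ)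
    (B : Matrix (Fin q) (Fin q) ℝ)
    (A : Matrix ((i : Fin q) × Fin (m i)) ((i : Fin q) × Fin (m i)) ℝ)
    (hA : A = (P * Z) * B * (P * Z)ᵀ)
    (β : ℝ)
    (S : ℕ → Matrix ((i : Fin q) × Fin (m i)) ((i : Fin q) × Fin (m i)) ℝ)
    (hS1 : S 1 = A * Aᵀ + Aᵀ * A)
    (hSk : ∀ k, 1 ≤ k →
      S (k + 1) = A * (1 + β ^ 2 • S k) * Aᵀ + Aᵀ * (1 + β ^ 2 • S k) * A) :
    ∀ k, 1 ≤ k →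
      LinearMap.range (S k).mulVecLin ≤ LinearMap.range (P * Z).mulVecLin ∧
      (S k).rank ≤ q := by
  intro k hk
  have hrange : LinearMap.range (S k).mulVecLin ≤ LinearMap.range (P * Z).mulVecLin := by
    match k, hk with
    | 1, _ =>
      rw [hS1]
      simpa only [Matrix.mul_one] using range_mulVecLin_mul_mul_transpose_add_le hA 1
    | j + 2, _ =>
      rw [hSk (j + 1) j.succ_pos]
      exact range_mulVecLin_mul_mul_transpose_add_le hA _
  refine ⟨hrange, ?_⟩
  calc (S k).rank ≤ (P * Z).rank := Submodule.finrank_mono hrange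
    _ ≤ Fintype.card (Fin q) := (P * Z).rank_le_card_width
    _ = q := Fintype.card_fin q

/-- For an ideal adjacency matrix `A = (PZ)B(PZ)ᵀ`, where `P` is a
permutation matrix and `Z = Diag{z₁,…,z_q}` is block diagonal with `z_i` the all-ones
vector of length `n_i ≥ 1` (nodes indexed by the sigma type `Σ i : Fin q, Fin (m i)`),
every iterate `S_k` (`k ≥ 1`) of the similarity iteration has column space contained in
the column space of `PZ`, and hence `rank S_k ≤ q`. -/
theorem ideal_colSpace_Sk_le_colSpace_PZ (q : ℕ) (m : Fin q → ℕ) (hm : ∀ i, 1 ≤ m i)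
    (P : Matrix ((i : Fin q) × Fin (m i)) ((i : Fin q) × Fin (m i)) ℝ)
    (hP : ∃ σ : Equiv.Perm ((i : Fin q) × Fin (m i)), P = σ.permMatrix ℝ)
    (Z : Matrix ((i : Fin q) × Fin (m i)) (Fin q) ℝ)
    (hZ : ∀ i j, Z i j = if i.1 = j then 1 else 0)
    (B : Matrix (Fin q) (Fin q) ℝ)
    (A : Matrix ((i : Fin q) × Fin (m i)) ((i : Fin q) × Fin (m i)) ℝ)
    (hA : A = (P * Z) * B * (P * Z)ᵀ)
    (β : ℝ)
    (S : ℕ → Matrix ((i : Fin q) × Fin (m i)) ((i : Fin q) × Fin (m i)) ℝ)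
    (hS1 : S 1 = A * Aᵀ + Aᵀ * A)
    (hSk : ∀ k, 1 ≤ k →
      S (k + 1) = A * (1 + β ^ 2 • S k) * Aᵀ + Aᵀ * (1 + β ^ 2 • S k) * A) :
    ∀ k, 1 ≤ k →
      LinearMap.range (S k).mulVecLin ≤ LinearMap.range (P * Z).mulVecLin ∧
      (S k).rank ≤ q :=
  ideal_colSpace_Sk_le_colSpace_PZ_general q m P Z B A hA β S hS1 hSk
end

section
/- Let A = (PZ)B(PZ)ᵀ be an ideal adjacency matrix with P an n×n permutation matrix, B a q×q real matrix, and Z = Diag{z_1, …, z_q} ∈ ℝ^{n×q} block diagonal with z_i the all-ones vector of length n_i ≥ 1. Let N := ZᵀZ = diag(n_1, …, n_q), β ∈ ℝ, and let S_k be the similarity iteration for A. Define Ŝ_k := N⁻¹(PZ)ᵀ S_k (PZ) N⁻¹. Then S_k = (PZ) Ŝ_k (PZ)ᵀ for all k ≥ 1, each Ŝ_k is positive semidefinite, and the Ŝ_k satisfy the recurrence Ŝ_1 = B N Bᵀ + Bᵀ N B and Ŝ_k = B N_k Bᵀ + Bᵀ N_k B for k > 1, where N_k := N + β² N Ŝ_{k−1}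 N. -/
/-!
Since `(PZ)ᵀ(PZ) = ZᵀZ = N`, products of matrices of the form `(PZ) X (PZ)ᵀ` stay of that form:
`(PZ) X (PZ)ᵀ · (PZ) Y (PZ)ᵀ = (PZ) (X N Y) (PZ)ᵀ`. By induction every `S_k` is therefore
`(PZ) C_k (PZ)ᵀ`, where `C_k` is given by the recurrence, and the compression `N⁻¹ (PZ)ᵀ · (PZ) N⁻¹`
recovers `C_k` because `N` is invertible (all `n_i ≥ 1`). Positive semidefiniteness is preserved
by congruences `X ↦ Y X Yᵀ`, sums and nonnegative scalings, so it propagates along the recurrence.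
-/

open Matrix

theorem transpose_conj {R n q : Type*} [CommRing R] [Fintype q] (M : Matrix n q R)
    (X : Matrix q q R) : (M * X * Mᵀ)ᵀ = M * Xᵀ * Mᵀ := by
  simp only [transpose_mul, transpose_transpose, Matrix.mul_assoc]

section Conjugation

variable {R n q : Type*} [CommRing R] [Fintype n] [Fintype q] {M : Matrix n q R}
  {N : Matrix q q R}

theorem conj_mul_conj (hM : Mᵀ * M = N) (X Y : Matrix q q R) :
    M * X * Mᵀ * (M * Y * Mᵀ) = M * (X * N * Y) * Mᵀ := by
  subst hM
  simp only [Matrix.mul_assoc]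

theorem conj_mul_one_add_smul_conj_mul_conj [DecidableEq n] (hM : Mᵀ * M = N)
    (X C Y : Matrix q q R) (c : R) :
    M * X * Mᵀ * (1 + c • (M * C * Mᵀ)) * (M * Y * Mᵀ) =
      M * (X * (N + c • (N * C * N)) * Y) * Mᵀ := by
  subst hM
  simp only [Matrix.mul_add, Matrix.add_mul, Matrix.mul_one, Matrix.mul_smul, Matrix.smul_mul,
    Matrix.mul_assoc]

theorem inv_mul_transpose_mul_conj_mul_mul_inv [DecidableEq q] (hM : Mᵀ * M = N)
    (hN : IsUnit N.det) (C : Matrix q q R) :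
    N⁻¹ * Mᵀ * (M * C * Mᵀ) * M * N⁻¹ = C := by
  calc N⁻¹ * Mᵀ * (M * C * Mᵀ) * M * N⁻¹ = N⁻¹ * (Mᵀ * M) * C * ((Mᵀ * M) * N⁻¹) := by
        simp only [Matrix.mul_assoc]
    _ = C := by rw [hM, nonsing_inv_mul _ hN, mul_nonsing_inv _ hN, Matrix.one_mul, Matrix.mul_one]

end Conjugation

theorem transpose_mul_self_eq_diagonal_card {R ι : Type*} [Semiring R] [Fintype ι] [DecidableEq ι]
    {κ : ι → Type*} [∀ i, Fintype (κ i)] {Z : Matrix ((i : ι) × κ i) ι R}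
    (hZ : ∀ i j, Z i j = if i.1 = j then 1 else 0) :
    Zᵀ * Z = diagonal fun j => (Fintype.card (κ j) : R) := by
  ext j j'
  simp only [mul_apply, transpose_apply, hZ, ← Finset.univ_sigma_univ, Finset.sum_sigma]
  by_cases h : j = j'
  · subst h
    simp
  · simp [h, Ne.symm h]

theorem transpose_permMatrix_mul_self {R n : Type*} [CommRing R] [Fintype n] [DecidableEq n]
    (σ : Equiv.Perm n) : (σ.permMatrix R)ᵀ * σ.permMatrix R = 1 := by
  simp [← permMatrix_mul]

namespace Matrix.PosSemidef

variable {q : Type*} [Fintype q]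

theorem mul_mul_transpose_add_transpose_mul_mul {D : Matrix q q ℝ} (hD : D.PosSemidef)
    (B : Matrix q q ℝ) : (B * D * Bᵀ + Bᵀ * D * B).PosSemidef := by
  simpa only [conjTranspose_eq_transpose_of_trivial, conjTranspose_conjTranspose] using
    (hD.mul_mul_conjTranspose_same B).add (hD.conjTranspose_mul_mul_same B)

theorem add_smul_mul_mul_self {N C : Matrix q q ℝ} (hN : N.PosSemidef) (hC : C.PosSemidef)
    {c : ℝ} (hc : 0 ≤ c) : (N + c • (N * C * N)).PosSemidef := by
  have hNCN : (Nᴴ * C * N).PosSemidef := hC.conjTranspose_mul_mul_same N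
  rw [hN.1.eq] at hNCN
  exact hN.add (hNCN.smul hc)

end Matrix.PosSemidef

theorem compressed_similarity_recurrence_of_transpose_mul_self {n q : Type*} [Fintype n]
    [Fintype q] [DecidableEq n] [DecidableEq q] {M : Matrix n q ℝ} {N : Matrix q q ℝ}
    (hM : Mᵀ * M = N) (hN : IsUnit N.det) {B : Matrix q q ℝ} {A : Matrix n n ℝ}
    (hA : A = M * B * Mᵀ) {β : ℝ} {S : ℕ → Matrix n n ℝ} (hS1 : S 1 = A * Aᵀ + Aᵀ * A)
    (hSk : ∀ k, 1 ≤ k →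
      S (k + 1) = A * (1 + β ^ 2 • S k) * Aᵀ + Aᵀ * (1 + β ^ 2 • S k) * A)
    {Shat : ℕ → Matrix q q ℝ} (hShat : ∀ k, Shat k = N⁻¹ * Mᵀ * S k * M * N⁻¹) :
    (∀ k, 1 ≤ k → S k = M * Shat k * Mᵀ ∧ (Shat k).PosSemidef) ∧
    Shat 1 = B * N * Bᵀ + Bᵀ * N * B ∧
    (∀ k, 1 ≤ k →
      Shat (k + 1) = B * (N + β ^ 2 • (N * Shat k * N)) * Bᵀ
        + Bᵀ * (N + β ^ 2 • (N * Shat k * N)) * B) := by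
  have hAT : Aᵀ = M * Bᵀ * Mᵀ := by rw [hA, transpose_conj]
  have compress {k : ℕ} {C : Matrix q q ℝ} (h : S k = M * C * Mᵀ) : Shat k = C := by
    rw [hShat, h, inv_mul_transpose_mul_conj_mul_mul_inv hM hN]
  have hS1_conj : S 1 = M * (B * N * Bᵀ + Bᵀ * N * B) * Mᵀ := by
    rw [hS1, hAT, hA, conj_mul_conj hM, conj_mul_conj hM, ← Matrix.add_mul, ← Matrix.mul_add]
  have hSk_conj {k : ℕ} (hk : 1 ≤ k) {C : Matrix q q ℝ} (h : S k = M * C * Mᵀ) :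
      S (k + 1) = M * (B * (N + β ^ 2 • (N * C * N)) * Bᵀ
        + Bᵀ * (N + β ^ 2 • (N * C * N)) * B) * Mᵀ := by
    rw [hSk k hk, h, hAT, hA, conj_mul_one_add_smul_conj_mul_conj hM,
      conj_mul_one_add_smul_conj_mul_conj hM, ← Matrix.add_mul, ← Matrix.mul_add]
  have hNpsd : N.PosSemidef := by
    simpa only [← hM, conjTranspose_eq_transpose_of_trivial] using
      posSemidef_conjTranspose_mul_self M
  have conj_and_psd (k : ℕ) (hk : 1 ≤ k) : S k = M * Shat k * Mᵀ ∧ (Shat k).PosSemidef := by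
    induction k, hk using Nat.le_induction with
    | base =>
      rw [compress hS1_conj]
      exact ⟨hS1_conj, hNpsd.mul_mul_transpose_add_transpose_mul_mul B⟩
    | succ k hk ih =>
      have hnext := hSk_conj hk ih.1
      rw [compress hnext]
      have hNk := hNpsd.add_smul_mul_mul_self ih.2 (sq_nonneg β)
      exact ⟨hnext, hNk.mul_mul_transpose_add_transpose_mul_mul B⟩
  exact ⟨conj_and_psd, compress hS1_conj, fun k hk => compress (hSk_conj hk (conj_and_psd k hk).1)⟩

/-- For an ideal adjacency matrix `A = (PZ)B(PZ)ᵀ` with `N := ZᵀZ`, the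
compressed matrices `Ŝ_k := N⁻¹(PZ)ᵀ S_k (PZ) N⁻¹` satisfy `S_k = (PZ) Ŝ_k (PZ)ᵀ`, each
`Ŝ_k` is positive semidefinite, and they obey the recurrence
`Ŝ₁ = B N Bᵀ + Bᵀ N B`, `Ŝ_{k+1} = B N_{k+1} Bᵀ + Bᵀ N_{k+1} B` with
`N_{k+1} = N + β² N Ŝ_k N`. -/
theorem ideal_compressed_similarity_recurrence (q : ℕ) (m : Fin q → ℕ) (hm : ∀ i, 1 ≤ m i)
    (P : Matrix ((i : Fin q) × Fin (m i)) ((i : Fin q) × Fin (m i)) ℝ)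
    (hP : ∃ σ : Equiv.Perm ((i : Fin q) × Fin (m i)), P = σ.permMatrix ℝ)
    (Z : Matrix ((i : Fin q) × Fin (m i)) (Fin q) ℝ)
    (hZ : ∀ i j, Z i j = if i.1 = j then 1 else 0)
    (B : Matrix (Fin q) (Fin q) ℝ)
    (A : Matrix ((i : Fin q) × Fin (m i)) ((i : Fin q) × Fin (m i)) ℝ)
    (hA : A = (P * Z) * B * (P * Z)ᵀ)
    (β : ℝ)
    (S : ℕ → Matrix ((i : Fin q) × Fin (m i)) ((i : Fin q) × Fin (m i)) ℝ)
    (hS1 : S 1 = A * Aᵀ + Aᵀ * A)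
    (hSk : ∀ k, 1 ≤ k →
      S (k + 1) = A * (1 + β ^ 2 • S k) * Aᵀ + Aᵀ * (1 + β ^ 2 • S k) * A)
    (N : Matrix (Fin q) (Fin q) ℝ) (hN : N = Zᵀ * Z)
    (Shat : ℕ → Matrix (Fin q) (Fin q) ℝ)
    (hShat : ∀ k, Shat k = N⁻¹ * (P * Z)ᵀ * S k * (P * Z) * N⁻¹) :
    (∀ k, 1 ≤ k → S k = (P * Z) * Shat k * (P * Z)ᵀ ∧ (Shat k).PosSemidef) ∧
    Shat 1 = B * N * Bᵀ + Bᵀ * N * B ∧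
    (∀ k, 1 ≤ k →
      Shat (k + 1) = B * (N + β ^ 2 • (N * Shat k * N)) * Bᵀ
        + Bᵀ * (N + β ^ 2 • (N * Shat k * N)) * B) := by
  obtain ⟨σ, rfl⟩ := hP
  have hPZ : (σ.permMatrix ℝ * Z)ᵀ * (σ.permMatrix ℝ * Z) = N := by
    rw [transpose_mul, Matrix.mul_assoc, ← Matrix.mul_assoc _ _ Z, transpose_permMatrix_mul_self,
      Matrix.one_mul, hN]
  have hNdiag : N = diagonal fun j => (m j : ℝ) := by
    simpa only [hN, Fintype.card_fin] using transpose_mul_self_eq_diagonal_card hZ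
  have hNdet : IsUnit N.det := by
    rw [hNdiag, det_diagonal, isUnit_iff_ne_zero, Finset.prod_ne_zero_iff]
    exact fun j _ => Nat.cast_ne_zero.mpr (Nat.one_le_iff_ne_zero.mp (hm j))
  exact compressed_similarity_recurrence_of_transpose_mul_self hPZ hNdet hA hS1 hSk hShat
end

section
/- Let B be a q×q real matrix, N a q×q diagonal matrix with strictly positive diagonal entries, β ∈ ℝ, and define Ŝ_1 = B N Bᵀ + Bᵀ N B and Ŝ_k = B N_k Bᵀ + Bᵀ N_k B for k > 1 with N_k = N + β² N Ŝ_{k−1} N. Then for every k ≥ 1, the kernel of Ŝ_k equals the set of vectors x ∈ ℝ^q with Bᵀx = 0 and Bx = 0 (i.e., the kernel of the stacked matrix [Bᵀ; B]). -/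
/-!
Every `Ŝ_k` has the form `B M Bᵀ + Bᵀ M B` with `M` positive definite: this holds for `M = N`,
and if `Ŝ_k` has this form it is positive semidefinite, so `N + β² N Ŝ_k N` is again positive
definite. For such `M`, `xᵀ (B M Bᵀ + Bᵀ M B) x = (Bᵀx)ᵀ M (Bᵀx) + (Bx)ᵀ M (Bx)` is a sum of two
nonnegative terms, which vanishes exactly when `Bᵀx = 0` and `Bx = 0`.
-/

open Matrix
open scoped ComplexOrder

namespace Matrix

theorem IsDiag.posDef {n R : Type*} [CommRing R] [PartialOrder R] [StarRing R]
    [StarOrderedRing R] [NoZeroDivisors R] [DecidableEq n] {N : Matrix n n R} (hN : N.IsDiag)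
    (hpos : ∀ i, 0 < N i i) : N.PosDef :=
  hN.diagonal_diag ▸ PosDef.diagonal hpos

section RCLike

variable {n 𝕜 : Type*} [Fintype n] [RCLike 𝕜]

theorem PosSemidef.ker_add {A C : Matrix n n 𝕜} (hA : A.PosSemidef) (hC : C.PosSemidef) :
    LinearMap.ker (A + C).mulVecLin = LinearMap.ker A.mulVecLin ⊓ LinearMap.ker C.mulVecLin := by
  ext x
  rw [Submodule.mem_inf]
  simp only [LinearMap.mem_ker, mulVecLin_apply]
  rw [← (hA.add hC).dotProduct_mulVec_zero_iff, ← hA.dotProduct_mulVec_zero_iff,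
    ← hC.dotProduct_mulVec_zero_iff, add_mulVec, dotProduct_add]
  exact add_eq_zero_iff_of_nonneg (hA.dotProduct_mulVec_nonneg x) (hC.dotProduct_mulVec_nonneg x)

theorem PosDef.dotProduct_mulVec_eq_zero_iff {M : Matrix n n 𝕜} (hM : M.PosDef) (x : n → 𝕜) :
    star x ⬝ᵥ M *ᵥ x = 0 ↔ x = 0 := by
  refine ⟨fun h => ?_, fun h => by simp [h]⟩
  by_contra hx
  exact (hM.dotProduct_mulVec_pos hx).ne' h

theorem PosDef.ker_conjTranspose_mul_mul_same {m : Type*} [Fintype m] {M : Matrix m m 𝕜}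
    (hM : M.PosDef) (B : Matrix m n 𝕜) :
    LinearMap.ker (Bᴴ * M * B).mulVecLin = LinearMap.ker B.mulVecLin := by
  ext x
  simp only [LinearMap.mem_ker, mulVecLin_apply,
    ← (hM.posSemidef.conjTranspose_mul_mul_same B).dotProduct_mulVec_zero_iff]
  rw [← mulVec_mulVec, ← mulVec_mulVec, dotProduct_mulVec, ← star_mulVec]
  exact hM.dotProduct_mulVec_eq_zero_iff _

theorem PosDef.add_smul_mul_mul_self {N S : Matrix n n 𝕜} (hN : N.PosDef) (hS : S.PosSemidef)
    {c : 𝕜} (hc : 0 ≤ c) : (N + c • (N * S * N)).PosDef := by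
  refine hN.add_posSemidef (PosSemidef.smul ?_ hc)
  simpa only [hN.isHermitian.eq] using hS.conjTranspose_mul_mul_same N

end RCLike

section Real

variable {n : Type*} [Fintype n] {M : Matrix n n ℝ}

theorem PosDef.posSemidef_mul_mul_transpose_add (hM : M.PosDef) (B : Matrix n n ℝ) :
    (B * M * Bᵀ + Bᵀ * M * B).PosSemidef := by
  simpa only [conjTranspose_eq_transpose_of_trivial, transpose_transpose] using
    (hM.posSemidef.conjTranspose_mul_mul_same Bᵀ).add (hM.posSemidef.conjTranspose_mul_mul_same B)

theorem PosDef.ker_mul_mul_transpose_add (hM : M.PosDef) (B : Matrix n n ℝ) :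
    LinearMap.ker (B * M * Bᵀ + Bᵀ * M * B).mulVecLin
      = LinearMap.ker Bᵀ.mulVecLin ⊓ LinearMap.ker B.mulVecLin := by
  have hker := (hM.posSemidef.conjTranspose_mul_mul_same Bᵀ).ker_add
    (hM.posSemidef.conjTranspose_mul_mul_same B)
  rwa [hM.ker_conjTranspose_mul_mul_same, hM.ker_conjTranspose_mul_mul_same,
    conjTranspose_eq_transpose_of_trivial, conjTranspose_eq_transpose_of_trivial,
    transpose_transpose] at hker

end Real

end Matrix

/-- For the compressed similarity iteration `Ŝ₁ = B N Bᵀ + Bᵀ N B`,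
`Ŝ_{k+1} = B N_{k+1} Bᵀ + Bᵀ N_{k+1} B` with `N_{k+1} = N + β² N Ŝ_k N`, where `N` is
diagonal with strictly positive diagonal entries, the kernel of every `Ŝ_k` (`k ≥ 1`)
equals the set of `x` with `Bᵀ x = 0` and `B x = 0`. -/
theorem compressed_ker_eq_ker_inter (q : ℕ) (B : Matrix (Fin q) (Fin q) ℝ)
    (N : Matrix (Fin q) (Fin q) ℝ)
    (hNdiag : ∀ i j, i ≠ j → N i j = 0) (hNpos : ∀ i, 0 < N i i)
    (β : ℝ)
    (Shat : ℕ → Matrix (Fin q) (Fin q) ℝ)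
    (hShat1 : Shat 1 = B * N * Bᵀ + Bᵀ * N * B)
    (hShatk : ∀ k, 1 ≤ k →
      Shat (k + 1) = B * (N + β ^ 2 • (N * Shat k * N)) * Bᵀ
        + Bᵀ * (N + β ^ 2 • (N * Shat k * N)) * B) :
    ∀ k, 1 ≤ k →
      LinearMap.ker (Shat k).mulVecLin
        = LinearMap.ker Bᵀ.mulVecLin ⊓ LinearMap.ker B.mulVecLin := by
  have hN : N.PosDef := IsDiag.posDef hNdiag hNpos
  have hweight : ∀ k, 1 ≤ k → ∃ M : Matrix (Fin q) (Fin q) ℝ,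
      M.PosDef ∧ Shat k = B * M * Bᵀ + Bᵀ * M * B := by
    intro k hk
    induction k, hk using Nat.le_induction with
    | base => exact ⟨N, hN, hShat1⟩
    | succ k hk ih =>
      obtain ⟨M, hM, hShat⟩ := ih
      have hS : (Shat k).PosSemidef := hShat ▸ hM.posSemidef_mul_mul_transpose_add B
      exact ⟨_, hN.add_smul_mul_mul_self hS (sq_nonneg β), hShatk k hk⟩
  intro k hk
  obtain ⟨M, hM, hShat⟩ := hweight k hk
  rw [hShat, hM.ker_mul_mul_transpose_add]
end

section
/- Let B be a q×q real matrix that is a minimal role matrix, i.e., no two rows of the compound matrix [B Bᵀ] are linearly dependent (in particular no row of [B Bᵀ] is zero). Let N be a q×q diagonal matrix with strictly positive entries, β ∈ ℝ, and let Ŝ_k be the compressed similarity iteration. If Ŝ_k = V Vᵀ is a rank factorization with V ∈ ℝ^{q×r} and r = rank(Ŝ_k), then every row of V is nonzero, and no two distinct rows of V are scalar multiples of each other. -/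
/-!
Unrolling the recursion, every `Ŝ_k` has the form `B M Bᵀ + Bᵀ M B` with `M` positive definite:
`M = N` for `k = 1`, and `N + β² N Ŝ_{k-1} N` is positive definite because `Ŝ_{k-1}` is positive
semidefinite. So `xᵀ Ŝ_k x = 0` forces `xᵀ B = 0` and `xᵀ Bᵀ = 0`. Since `xᵀ Ŝ_k x = ‖xᵀ V‖²`,
every linear relation among the rows of `V` is one among the rows of `[B Bᵀ]`, and a zero row or
two parallel rows of `V` would give the same in `[B Bᵀ]`.
-/

open Matrix

namespace Matrix

variable {n m r p : Type*} [Fintype n] [Fintype m]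

lemma dotProduct_mul_mul_transpose_mulVec (B : Matrix n m ℝ) (M : Matrix m m ℝ) (x : n → ℝ) :
    x ⬝ᵥ ((B * M * Bᵀ) *ᵥ x) = (x ᵥ* B) ⬝ᵥ (M *ᵥ (x ᵥ* B)) := by
  rw [← mulVec_mulVec, ← mulVec_mulVec, dotProduct_mulVec, ← mulVec_transpose]

lemma PosSemidef.mul_mul_transpose_add {M : Matrix n n ℝ} (hM : M.PosSemidef)
    (B : Matrix n n ℝ) : (B * M * Bᵀ + Bᵀ * M * B).PosSemidef := by
  simpa only [conjTranspose_eq_transpose_of_trivial] using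
    (hM.mul_mul_conjTranspose_same B).add (hM.conjTranspose_mul_mul_same B)

lemma PosDef.add_sq_smul_mul_mul {N S : Matrix n n ℝ} (hN : N.PosDef) (hS : S.PosSemidef)
    (β : ℝ) : (N + β ^ 2 • (N * S * N)).PosDef := by
  have hcongr : β ^ 2 • (N * S * N) = β • N * S * (β • N)ᴴ := by
    rw [conjTranspose_smul, hN.isHermitian.eq, star_trivial, smul_mul_assoc, smul_mul_assoc,
      mul_smul_comm, smul_smul, sq]
  exact hN.add_posSemidef (hcongr ▸ hS.mul_mul_conjTranspose_same _)

lemma vecMul_eq_zero_of_dotProduct_mul_mul_transpose_add_mulVec_eq_zero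
    {M : Matrix n n ℝ} (hM : M.PosDef) (B : Matrix n n ℝ) {x : n → ℝ}
    (hx : x ⬝ᵥ ((B * M * Bᵀ + Bᵀ * M * B) *ᵥ x) = 0) : x ᵥ* B = 0 ∧ x ᵥ* Bᵀ = 0 := by
  have hnonneg (y : n → ℝ) : 0 ≤ y ⬝ᵥ (M *ᵥ y) := by
    simpa using hM.posSemidef.dotProduct_mulVec_nonneg y
  have hdef (y : n → ℝ) (hy : y ⬝ᵥ (M *ᵥ y) = 0) : y = 0 := by
    by_contra hy0
    simpa [hy] using hM.dotProduct_mulVec_pos hy0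
  have hsplit := dotProduct_mul_mul_transpose_mulVec Bᵀ M x
  rw [transpose_transpose] at hsplit
  rw [add_mulVec, dotProduct_add, dotProduct_mul_mul_transpose_mulVec, hsplit,
    add_eq_zero_iff_of_nonneg (hnonneg _) (hnonneg _)] at hx
  exact ⟨hdef _ hx.1, hdef _ hx.2⟩

lemma vecMul_fromCols_eq_zero_of_vecMul_eq_zero [Fintype r]
    {M : Matrix n n ℝ} (hM : M.PosDef) {B : Matrix n n ℝ} {V : Matrix n r ℝ}
    (hV : B * M * Bᵀ + Bᵀ * M * B = V * Vᵀ) {x : n → ℝ} (hx : x ᵥ* V = 0) :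
    x ᵥ* fromCols B Bᵀ = 0 := by
  have hquad : x ⬝ᵥ ((B * M * Bᵀ + Bᵀ * M * B) *ᵥ x) = 0 := by
    rw [hV, ← mulVec_mulVec, dotProduct_mulVec, hx, zero_dotProduct]
  obtain ⟨hB, hBt⟩ := vecMul_eq_zero_of_dotProduct_mul_mul_transpose_add_mulVec_eq_zero hM B hquad
  rw [vecMul_fromCols, hB, hBt]
  exact Sum.elim_zero_zero

variable {R : Type*} [CommRing R] [DecidableEq n] {V : Matrix n r R} {A : Matrix n p R}

lemma row_ne_zero_of_vecMul_eq_zero_imp (hVA : ∀ x, x ᵥ* V = 0 → x ᵥ* A = 0) {i : n}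
    (hA : A i ≠ 0) : V i ≠ 0 := by
  intro hV
  apply hA
  simpa only [single_one_vecMul, row_def] using
    hVA (Pi.single i 1) (by rwa [single_one_vecMul, row_def])

lemma row_ne_smul_row_of_vecMul_eq_zero_imp [Nontrivial R]
    (hVA : ∀ x, x ᵥ* V = 0 → x ᵥ* A = 0) {i j : n}
    (hA : ∀ c d : R, c • A i + d • A j = 0 → c = 0 ∧ d = 0) (c : R) :
    V i ≠ c • V j := by
  intro hV
  have hrel := hVA (Pi.single i 1 + (-c) • Pi.single j 1) (by
    simp only [add_vecMul, smul_vecMul, single_one_vecMul, row_def]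
    rw [hV, neg_smul, add_neg_cancel])
  simp only [add_vecMul, smul_vecMul, single_one_vecMul, row_def] at hrel
  exact one_ne_zero (hA 1 (-c) (by rwa [one_smul])).1

end Matrix

lemma exists_posDef_eq_mul_mul_transpose_add {n : Type*} [Fintype n] {B N : Matrix n n ℝ}
    (hN : N.PosDef) {β : ℝ} {S : ℕ → Matrix n n ℝ} (hS1 : S 1 = B * N * Bᵀ + Bᵀ * N * B)
    (hSsucc : ∀ k, 1 ≤ k → S (k + 1) = B * (N + β ^ 2 • (N * S k * N)) * Bᵀ
        + Bᵀ * (N + β ^ 2 • (N * S k * N)) * B) :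
    ∀ k, 1 ≤ k → ∃ M : Matrix n n ℝ, M.PosDef ∧ S k = B * M * Bᵀ + Bᵀ * M * B := by
  intro k hk
  induction k, hk using Nat.le_induction with
  | base => exact ⟨N, hN, hS1⟩
  | succ k hk ih =>
    obtain ⟨M, hM, hSk⟩ := ih
    have hSpsd : (S k).PosSemidef := hSk ▸ hM.posSemidef.mul_mul_transpose_add B
    exact ⟨_, hN.add_sq_smul_mul_mul hSpsd β, hSsucc k hk⟩

theorem minimal_rankFactor_rows_nonzero_nonparallel_general (q : ℕ)
    (B : Matrix (Fin q) (Fin q) ℝ)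
    (hBrow : ∀ i, (Matrix.fromCols B Bᵀ) i ≠ 0)
    (hBmin : ∀ i j, i ≠ j → ∀ c d : ℝ,
      c • (Matrix.fromCols B Bᵀ) i + d • (Matrix.fromCols B Bᵀ) j = 0 →
        c = 0 ∧ d = 0)
    (N : Matrix (Fin q) (Fin q) ℝ)
    (hNdiag : ∀ i j, i ≠ j → N i j = 0) (hNpos : ∀ i, 0 < N i i)
    (β : ℝ)
    (Shat : ℕ → Matrix (Fin q) (Fin q) ℝ)
    (hShat1 : Shat 1 = B * N * Bᵀ + Bᵀ * N * B)
    (hShatk : ∀ k, 1 ≤ k →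
      Shat (k + 1) = B * (N + β ^ 2 • (N * Shat k * N)) * Bᵀ
        + Bᵀ * (N + β ^ 2 • (N * Shat k * N)) * B)
    (k : ℕ) (hk : 1 ≤ k)
    (r : ℕ) (V : Matrix (Fin q) (Fin r) ℝ)
    (hV : Shat k = V * Vᵀ) :
    (∀ i, V i ≠ 0) ∧ ∀ i j, i ≠ j → ¬∃ c : ℝ, V i = c • V j := by
  have hN : N.PosDef := by
    have hNdiag' : N.IsDiag := fun i j hij => hNdiag i j hij
    rw [← hNdiag'.diagonal_diag]
    exact posDef_diagonal_iff.mpr hNpos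
  obtain ⟨M, hM, hSk⟩ := exists_posDef_eq_mul_mul_transpose_add hN hShat1 hShatk k hk
  have hVA : ∀ x, x ᵥ* V = 0 → x ᵥ* fromCols B Bᵀ = 0 := fun x =>
    vecMul_fromCols_eq_zero_of_vecMul_eq_zero hM (hSk ▸ hV)
  exact ⟨fun i => row_ne_zero_of_vecMul_eq_zero_imp hVA (hBrow i),
    fun i j hij ⟨c, hc⟩ => row_ne_smul_row_of_vecMul_eq_zero_imp hVA (hBmin i j hij) c hc⟩

/-- Suppose `B` is a minimal role matrix: no row of the compound matrix
`[B Bᵀ]` is zero and no two distinct rows of `[B Bᵀ]` are linearly dependent. For the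
compressed similarity iteration with diagonal positive `N`, if `Ŝ_k = V Vᵀ` is a rank
factorization (`V ∈ ℝ^{q×r}`, `r = rank Ŝ_k`), then every row of `V` is nonzero and no
two distinct rows of `V` are scalar multiples of each other. -/
theorem minimal_rankFactor_rows_nonzero_nonparallel (q : ℕ)
    (B : Matrix (Fin q) (Fin q) ℝ)
    (hBrow : ∀ i, (Matrix.fromCols B Bᵀ) i ≠ 0)
    (hBmin : ∀ i j, i ≠ j → ∀ c d : ℝ,
      c • (Matrix.fromCols B Bᵀ) i + d • (Matrix.fromCols B Bᵀ) j = 0 →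
        c = 0 ∧ d = 0)
    (N : Matrix (Fin q) (Fin q) ℝ)
    (hNdiag : ∀ i j, i ≠ j → N i j = 0) (hNpos : ∀ i, 0 < N i i)
    (β : ℝ)
    (Shat : ℕ → Matrix (Fin q) (Fin q) ℝ)
    (hShat1 : Shat 1 = B * N * Bᵀ + Bᵀ * N * B)
    (hShatk : ∀ k, 1 ≤ k →
      Shat (k + 1) = B * (N + β ^ 2 • (N * Shat k * N)) * Bᵀ
        + Bᵀ * (N + β ^ 2 • (N * Shat k * N)) * B)
    (k : ℕ) (hk : 1 ≤ k)
    (r : ℕ) (V : Matrix (Fin q) (Fin r) ℝ)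
    (hV : Shat k = V * Vᵀ) (hr : r = (Shat k).rank) :
    (∀ i, V i ≠ 0) ∧ ∀ i j, i ≠ j → ¬∃ c : ℝ, V i = c • V j :=
  minimal_rankFactor_rows_nonzero_nonparallel_general q B hBrow hBmin N hNdiag hNpos β Shat hShat1
    hShatk k hk r V hV
end

section
/- Let A be a symmetric n×n real matrix and β ∈ ℝ, and let S_k be the similarity iteration S_1 = A Aᵀ + Aᵀ A, S_{k+1} = A(I + β² S_k)Aᵀ + Aᵀ(I + β² S_k)A. Then S_1 = 2A², every S_k commutes with A, and for every k ≥ 1, S_k = 2A² · Σ_{ℓ=1}^{k} (2β²)^{ℓ−1} A^{2(ℓ−1)}. -/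
/-!
For symmetric `A` the two terms of the recursion coincide, so `S_{k+1} = 2 A (1 + β² S_k) A`.
Writing `B = 2β² A²`, the claimed closed form is `S_k = 2 A² (1 + B + ⋯ + B^{k-1})`; this
geometric sum is a polynomial in `A`, hence commutes with `A`, and Horner's step
`1 + B · Σ_{ℓ<k} B^ℓ = Σ_{ℓ<k+1} B^ℓ` is exactly the recursion.
-/

open Matrix Finset

section GeomSum

variable {K R : Type*} [CommSemiring K] [Semiring R] [Algebra K R]

theorem sum_pow_smul_pow_two_mul_eq_geom_sum (c : K) (A : R) (k : ℕ) :
    ∑ ℓ ∈ range k, c ^ ℓ • A ^ (2 * ℓ) = ∑ ℓ ∈ range k, (c • A ^ 2) ^ ℓ := by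
  simp only [smul_pow, pow_mul]

theorem commute_geom_sum_smul_sq (c : K) (A : R) (k : ℕ) :
    Commute A (∑ ℓ ∈ range k, (c • A ^ 2) ^ ℓ) :=
  Commute.sum_right _ _ _ fun ℓ _ => ((Commute.self_pow A 2).smul_right c).pow_right ℓ

theorem mul_one_add_smul_two_smul_sq_mul_geom_sum_mul (b : K) (A : R) (k : ℕ) :
    A * (1 + b • (2 : K) • (A ^ 2 * ∑ ℓ ∈ range k, ((2 * b) • A ^ 2) ^ ℓ)) * A =
      A ^ 2 * ∑ ℓ ∈ range (k + 1), ((2 * b) • A ^ 2) ^ ℓ := by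
  have horner : 1 + b • (2 : K) • (A ^ 2 * ∑ ℓ ∈ range k, ((2 * b) • A ^ 2) ^ ℓ) =
      ∑ ℓ ∈ range (k + 1), ((2 * b) • A ^ 2) ^ ℓ := by
    rw [geom_sum_succ, smul_smul, mul_comm b, ← smul_mul_assoc, add_comm]
  rw [horner, mul_assoc, ← (commute_geom_sum_smul_sq _ A _).eq, ← mul_assoc, ← sq]

end GeomSum

/-- For symmetric `A`, the similarity iteration satisfies `S₁ = 2A²`,
every `S_k` commutes with `A`, and
`S_k = 2A² · Σ_{ℓ=1}^{k} (2β²)^{ℓ−1} A^{2(ℓ−1)}` for every `k ≥ 1`. -/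
theorem symmetric_Sk_closed_form (n : ℕ) (A : Matrix (Fin n) (Fin n) ℝ) (hA : Aᵀ = A)
    (β : ℝ)
    (S : ℕ → Matrix (Fin n) (Fin n) ℝ)
    (hS1 : S 1 = A * Aᵀ + Aᵀ * A)
    (hSk : ∀ k, 1 ≤ k →
      S (k + 1) = A * (1 + β ^ 2 • S k) * Aᵀ + Aᵀ * (1 + β ^ 2 • S k) * A) :
    S 1 = (2 : ℝ) • A ^ 2 ∧
    (∀ k, 1 ≤ k → S k * A = A * S k) ∧
    ∀ k, 1 ≤ k →
      S k = (2 : ℝ) • (A ^ 2 * ∑ ℓ ∈ Finset.range k, ((2 * β ^ 2) ^ ℓ) • A ^ (2 * ℓ)) := by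
  have hS1' : S 1 = (2 : ℝ) • A ^ 2 := by rw [hS1, hA, ← sq, two_smul]
  have closed (k : ℕ) (hk : 1 ≤ k) :
      S k = (2 : ℝ) • (A ^ 2 * ∑ ℓ ∈ range k, ((2 * β ^ 2) • A ^ 2) ^ ℓ) := by
    induction k, hk using Nat.le_induction with
    | base => simp [hS1']
    | succ k hk ih =>
      rw [hSk k hk, hA, ← two_smul ℝ, ih, mul_one_add_smul_two_smul_sq_mul_geom_sum_mul]
  simp only [sum_pow_smul_pow_two_mul_eq_geom_sum]
  refine ⟨hS1', fun k hk => ?_, closed⟩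
  rw [closed k hk]
  exact ((Commute.self_pow A 2).symm.mul_left (commute_geom_sum_smul_sq _ A k).symm).smul_left _
end

section
/- Let A be a symmetric n×n real matrix with eigenvalue α associated to eigenvector v, and let S_k be the similarity iteration for A with parameter β ∈ ℝ. Then v is an eigenvector of S_k with eigenvalue 2α² · Σ_{ℓ=1}^{k} (2β²α²)^{ℓ−1}; in particular, the eigenvalues [λ_i^{(k)}]² of S_k satisfy [λ_i^{(1)}]² = 2α_i² and [λ_i^{(k)}]² = [λ_i^{(1)}]² Σ_{ℓ=1}^{k} (β λ_i^{(1)})^{2(ℓ−1)}, where α_i are the eigenvalues of A. -/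
open Matrix

/-! The eigenvector `v` of `A` (and of `Aᵀ = A`) passes unchanged through each step
`M ↦ A M Aᵀ + Aᵀ M A`, which multiplies its eigenvalue by `2α²`. Hence the eigenvalue `s_k`
of `S_k` at `v` obeys `s₁ = 2α²`, `s_{k+1} = 2α² (1 + β² s_k)`, whose solution is the
geometric sum `2α² Σ_{ℓ<k} (2β²α²)^ℓ`. -/

section

variable {m R : Type*} [Fintype m] [CommRing R]

theorem mul_mul_transpose_add_transpose_mul_mul_mulVec {A M : Matrix m m R} {v : m → R}
    {α μ : R} (hAv : A *ᵥ v = α • v) (hAtv : Aᵀ *ᵥ v = α • v) (hMv : M *ᵥ v = μ • v) :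
    (A * M * Aᵀ + Aᵀ * M * A) *ᵥ v = (2 * α ^ 2 * μ) • v := by
  simp only [add_mulVec, ← mulVec_mulVec, hAv, hAtv, hMv, mulVec_smul, smul_smul]
  rw [← add_smul]
  ring_nf

theorem mul_one_add_mul_geom_sum {c d x : R} (hx : d * c = x) (k : ℕ) :
    c * (1 + d * (c * ∑ ℓ ∈ Finset.range k, x ^ ℓ))
      = c * ∑ ℓ ∈ Finset.range (k + 1), x ^ ℓ := by
  rw [geom_sum_succ, ← hx]
  ring

end

theorem symmetric_Sk_eigenvalue_general (n : ℕ) (A : Matrix (Fin n) (Fin n) ℝ) (hA : Aᵀ = A)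
    (β α : ℝ) (v : Fin n → ℝ) (hAv : A.mulVec v = α • v)
    (S : ℕ → Matrix (Fin n) (Fin n) ℝ)
    (hS1 : S 1 = A * Aᵀ + Aᵀ * A)
    (hSk : ∀ k, 1 ≤ k →
      S (k + 1) = A * (1 + β ^ 2 • S k) * Aᵀ + Aᵀ * (1 + β ^ 2 • S k) * A) :
    ∀ k, 1 ≤ k →
      (S k).mulVec v
        = (2 * α ^ 2 * ∑ ℓ ∈ Finset.range k, (2 * β ^ 2 * α ^ 2) ^ ℓ) • v ∧
      2 * α ^ 2 * ∑ ℓ ∈ Finset.range k, (2 * β ^ 2 * α ^ 2) ^ ℓ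
        = (2 * α ^ 2) * ∑ ℓ ∈ Finset.range k, (β ^ 2 * (2 * α ^ 2)) ^ ℓ := by
  have hAtv : Aᵀ *ᵥ v = α • v := hA ▸ hAv
  intro k hk
  refine ⟨?_, congrArg _ (Finset.sum_congr rfl fun ℓ _ => by ring)⟩
  induction k, hk using Nat.le_induction with
  | base =>
    have h := mul_mul_transpose_add_transpose_mul_mul_mulVec (μ := 1) hAv hAtv
      (by rw [one_mulVec, one_smul])
    simpa [hS1] using h
  | succ k hk ih =>
    have hMv : (1 + β ^ 2 • S k) *ᵥ v
        = (1 + β ^ 2 * (2 * α ^ 2 * ∑ ℓ ∈ Finset.range k, (2 * β ^ 2 * α ^ 2) ^ ℓ)) • v := by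
      rw [add_mulVec, one_mulVec, smul_mulVec, ih, smul_smul, add_smul, one_smul]
    rw [hSk k hk, mul_mul_transpose_add_transpose_mul_mul_mulVec hAv hAtv hMv,
      mul_one_add_mul_geom_sum (by ring)]

/-- If `A` is symmetric with eigenvector `v` for eigenvalue `α`, then `v`
is an eigenvector of every similarity iterate `S_k` with eigenvalue
`2α² Σ_{ℓ=1}^{k} (2β²α²)^{ℓ−1}`; i.e. the eigenvalues `[λ^{(k)}]²` of `S_k` satisfy
`[λ^{(1)}]² = 2α²` and `[λ^{(k)}]² = [λ^{(1)}]² Σ_{ℓ=1}^{k} (β λ^{(1)})^{2(ℓ−1)}`. -/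
theorem symmetric_Sk_eigenvalue (n : ℕ) (A : Matrix (Fin n) (Fin n) ℝ) (hA : Aᵀ = A)
    (β α : ℝ) (v : Fin n → ℝ) (hv : v ≠ 0) (hAv : A.mulVec v = α • v)
    (S : ℕ → Matrix (Fin n) (Fin n) ℝ)
    (hS1 : S 1 = A * Aᵀ + Aᵀ * A)
    (hSk : ∀ k, 1 ≤ k →
      S (k + 1) = A * (1 + β ^ 2 • S k) * Aᵀ + Aᵀ * (1 + β ^ 2 • S k) * A) :
    ∀ k, 1 ≤ k →
      (S k).mulVec v
        = (2 * α ^ 2 * ∑ ℓ ∈ Finset.range k, (2 * β ^ 2 * α ^ 2) ^ ℓ) • v ∧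
      2 * α ^ 2 * ∑ ℓ ∈ Finset.range k, (2 * β ^ 2 * α ^ 2) ^ ℓ
        = (2 * α ^ 2) * ∑ ℓ ∈ Finset.range k, (β ^ 2 * (2 * α ^ 2)) ^ ℓ :=
  symmetric_Sk_eigenvalue_general n A hA β α v hAv S hS1 hSk
end

section
/- Let a, b, β be real numbers with a > b > 0 and β > 0, and for k ≥ 1 define f_k(x) := x² · Σ_{ℓ=1}^{k} (βx)^{2(ℓ−1)}. Then for every k ≥ 1, f_{k+1}(a)·f_k(b) > f_k(a)·f_{k+1}(b); equivalently, the ratio f_k(a)/f_k(b) is strictly increasing in k. -/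
/-!
Write `G_k(x) = ∑_{ℓ<k} x^ℓ`, so that `f_k(x) = x² G_k((βx)²)`. After cancelling `a² b²`, the
claim is `G_{k+1}(X) G_k(Y) > G_k(X) G_{k+1}(Y)` for `X = (βa)² > Y = (βb)² > 0`. Since
`G_{k+1} = G_k + x^k`, this reduces to `X^k G_k(Y) > Y^k G_k(X)`, which holds termwise:
`X^k Y^ℓ > Y^k X^ℓ` for `ℓ < k`.
-/

open Finset

lemma pow_mul_pow_lt_pow_mul_pow {x y : ℝ} (hy : 0 < y) (hyx : y < x) {k ℓ : ℕ} (hℓk : ℓ < k) :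
    y ^ k * x ^ ℓ < x ^ k * y ^ ℓ := by
  obtain ⟨m, rfl⟩ := Nat.exists_eq_add_of_lt hℓk
  have hx : 0 < x := hy.trans hyx
  have hpow : y ^ (m + 1) < x ^ (m + 1) := pow_lt_pow_left₀ hyx hy.le m.succ_ne_zero
  calc y ^ (ℓ + m + 1) * x ^ ℓ = y ^ (m + 1) * (x ^ ℓ * y ^ ℓ) := by ring
    _ < x ^ (m + 1) * (x ^ ℓ * y ^ ℓ) := by gcongr
    _ = x ^ (ℓ + m + 1) * y ^ ℓ := by ring

lemma pow_mul_geom_sum_lt {x y : ℝ} (hy : 0 < y) (hyx : y < x) {k : ℕ} (hk : 0 < k) :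
    y ^ k * ∑ i ∈ range k, x ^ i < x ^ k * ∑ i ∈ range k, y ^ i := by
  rw [mul_sum, mul_sum]
  exact sum_lt_sum_of_nonempty (nonempty_range_iff.mpr hk.ne') fun ℓ hℓ ↦
    pow_mul_pow_lt_pow_mul_pow hy hyx (mem_range.mp hℓ)

lemma geom_sum_mul_geom_sum_succ_lt {x y : ℝ} (hy : 0 < y) (hyx : y < x) {k : ℕ} (hk : 0 < k) :
    (∑ i ∈ range k, x ^ i) * ∑ i ∈ range (k + 1), y ^ i
      < (∑ i ∈ range (k + 1), x ^ i) * ∑ i ∈ range k, y ^ i := by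
  rw [sum_range_succ, sum_range_succ]
  linear_combination pow_mul_geom_sum_lt hy hyx hk

/-- For `a > b > 0`, `β > 0`, and
`f_k(x) := x² Σ_{ℓ=1}^{k} (βx)^{2(ℓ−1)}`, one has
`f_{k+1}(a)·f_k(b) > f_k(a)·f_{k+1}(b)` for every `k ≥ 1`; i.e. the ratio
`f_k(a)/f_k(b)` is strictly increasing in `k`. -/
theorem fk_ratio_strictly_increasing (a b β : ℝ) (hab : a > b) (hb : b > 0) (hβ : β > 0)
    (f : ℕ → ℝ → ℝ)
    (hf : ∀ k x, f k x = x ^ 2 * ∑ ℓ ∈ Finset.range k, (β * x) ^ (2 * ℓ)) :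
    ∀ k, 1 ≤ k → f (k + 1) a * f k b > f k a * f (k + 1) b := by
  intro k hk
  have ha : 0 < a := hb.trans hab
  have hY : 0 < (β * b) ^ 2 := by positivity
  have hYX : (β * b) ^ 2 < (β * a) ^ 2 := by gcongr
  have key := mul_lt_mul_of_pos_left (geom_sum_mul_geom_sum_succ_lt hY hYX hk)
    (by positivity : 0 < a ^ 2 * b ^ 2)
  simp only [hf, pow_mul]
  linear_combination key
end

section
/- Let A be an n×n real matrix that, in a 2×2 block partition with diagonal blocks of sizes n_1×n_1 and n_2×n_2 (n = n_1 + n_2), has both diagonal blocks zero: A = [[0, A_{12}], [A_{21}, 0]]. Then for every β ∈ ℝ and every k ≥ 1, the similarity matrix S_k is block diagonal with respect to the same partition: S_k = [[S_{11}^{(k)}, 0], [0, S_{22}^{(k)}]]. -/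
/-!
Multiplying a block-diagonal matrix on both sides by matrices with zero diagonal blocks
gives again a block-diagonal matrix, and `Aᵀ` has zero diagonal blocks along with `A`.
Since `S₁` is the recursion applied to `S₀ = 0`, an induction on `k` finishes the proof.
-/

open Matrix

namespace Matrix

variable {m n R α : Type*}

def IsBlockDiag [Zero α] (M : Matrix (m ⊕ n) (m ⊕ n) α) : Prop :=
  ∃ (P : Matrix m m α) (Q : Matrix n n α), M = fromBlocks P 0 0 Q

theorem isBlockDiag_one [DecidableEq m] [DecidableEq n] [Zero α] [One α] :
    IsBlockDiag (1 : Matrix (m ⊕ n) (m ⊕ n) α) :=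
  ⟨1, 1, fromBlocks_one.symm⟩

theorem IsBlockDiag.add [AddZeroClass α] {M N : Matrix (m ⊕ n) (m ⊕ n) α}
    (hM : IsBlockDiag M) (hN : IsBlockDiag N) : IsBlockDiag (M + N) := by
  obtain ⟨P, Q, rfl⟩ := hM
  obtain ⟨P', Q', rfl⟩ := hN
  exact ⟨P + P', Q + Q', by simp only [fromBlocks_add, add_zero]⟩

theorem IsBlockDiag.smul [Zero α] [SMulZeroClass R α] (r : R) {M : Matrix (m ⊕ n) (m ⊕ n) α}
    (hM : IsBlockDiag M) : IsBlockDiag (r • M) := by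
  obtain ⟨P, Q, rfl⟩ := hM
  exact ⟨r • P, r • Q, by
    rw [fromBlocks_smul]
    congr <;> exact ext fun _ _ => smul_zero r⟩

theorem fromBlocks_zero_mul_fromBlocks_mul_fromBlocks_zero [Fintype m] [Fintype n]
    [NonUnitalNonAssocSemiring α] (B : Matrix m n α) (C : Matrix n m α) (P : Matrix m m α)
    (Q : Matrix n n α) (D : Matrix m n α) (E : Matrix n m α) :
    fromBlocks 0 B C 0 * fromBlocks P 0 0 Q * fromBlocks 0 D E 0 =
      fromBlocks (B * Q * E) 0 0 (C * P * D) := by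
  simp only [fromBlocks_multiply, Matrix.mul_zero, Matrix.zero_mul, add_zero, zero_add]

theorem IsBlockDiag.fromBlocks_zero_mul_mul_fromBlocks_zero [Fintype m] [Fintype n]
    [NonUnitalNonAssocSemiring α] {M : Matrix (m ⊕ n) (m ⊕ n) α} (hM : IsBlockDiag M)
    (B : Matrix m n α) (C : Matrix n m α) (D : Matrix m n α) (E : Matrix n m α) :
    IsBlockDiag (fromBlocks 0 B C 0 * M * fromBlocks 0 D E 0) := by
  obtain ⟨P, Q, rfl⟩ := hM
  exact ⟨_, _, fromBlocks_zero_mul_fromBlocks_mul_fromBlocks_zero B C P Q D E⟩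

theorem IsBlockDiag.mul_mul_transpose_add_transpose_mul_mul [Fintype m] [Fintype n]
    [NonUnitalNonAssocSemiring α] {M : Matrix (m ⊕ n) (m ⊕ n) α} (hM : IsBlockDiag M)
    (B : Matrix m n α) (C : Matrix n m α) :
    IsBlockDiag (fromBlocks 0 B C 0 * M * (fromBlocks 0 B C 0)ᵀ +
      (fromBlocks 0 B C 0)ᵀ * M * fromBlocks 0 B C 0) := by
  simp only [fromBlocks_transpose, transpose_zero]
  exact (hM.fromBlocks_zero_mul_mul_fromBlocks_zero _ _ _ _).add
    (hM.fromBlocks_zero_mul_mul_fromBlocks_zero _ _ _ _)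

end Matrix

/-- If `A` has, in a 2×2 block partition, both diagonal blocks zero
(`A = [[0, A₁₂], [A₂₁, 0]]`, as for a bipartite graph), then every similarity iterate
`S_k` (`k ≥ 1`) is block diagonal with respect to the same partition. -/
theorem bipartite_Sk_blockDiagonal (n₁ n₂ : ℕ)
    (A : Matrix (Fin n₁ ⊕ Fin n₂) (Fin n₁ ⊕ Fin n₂) ℝ)
    (A₁₂ : Matrix (Fin n₁) (Fin n₂) ℝ) (A₂₁ : Matrix (Fin n₂) (Fin n₁) ℝ)
    (hA : A = Matrix.fromBlocks 0 A₁₂ A₂₁ 0)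
    (β : ℝ)
    (S : ℕ → Matrix (Fin n₁ ⊕ Fin n₂) (Fin n₁ ⊕ Fin n₂) ℝ)
    (hS1 : S 1 = A * Aᵀ + Aᵀ * A)
    (hSk : ∀ k, 1 ≤ k →
      S (k + 1) = A * (1 + β ^ 2 • S k) * Aᵀ + Aᵀ * (1 + β ^ 2 • S k) * A) :
    ∀ k, 1 ≤ k → ∃ (S₁₁ : Matrix (Fin n₁) (Fin n₁) ℝ) (S₂₂ : Matrix (Fin n₂) (Fin n₂) ℝ),
      S k = Matrix.fromBlocks S₁₁ 0 0 S₂₂ := by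
  subst hA
  intro k hk
  show IsBlockDiag (S k)
  induction k, hk using Nat.le_induction with
  | base =>
    rw [hS1]
    simpa only [Matrix.mul_one] using
      isBlockDiag_one.mul_mul_transpose_add_transpose_mul_mul A₁₂ A₂₁
  | succ k hk ih =>
    rw [hSk k hk]
    exact (isBlockDiag_one.add (ih.smul _)).mul_mul_transpose_add_transpose_mul_mul A₁₂ A₂₁
end

section
/- Let A be an n×n real matrix and Q an n×n diagonal matrix with Q² = I such that QAQ = |A|, where |A| denotes the entrywise absolute value of A. Let S_k be the similarity iteration for A and S̃_k the similarity iteration for Ã := |A|, both with the same parameter β ∈ ℝ. Then for every k ≥ 1, S̃_k = Q S_k Q and S̃_k = |S_k| (entrywise); consequently S_k and S̃_k have the same rank and the same singular values. -/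
/-!
Conjugation by an involution `Q` is a ring automorphism of the matrix algebra, and a diagonal
`Q` with `Q² = 1` also commutes with transposition. Hence it carries the similarity iteration
of `A` to that of `QAQ = |A|`, so `S̃_k = Q S_k Q`, which has the same rank as `S_k` and
conjugate `S̃_k S̃_kᵀ = Q (S_k S_kᵀ) Q`. Entrywise, `Q S_k Q` only flips signs, and `S̃_k` is
nonnegative because it is built from `|A|` by sums and products of nonnegative matrices; so
`S̃_k = |S_k|`.
-/

open Matrix

theorem conj_mul_conj_of_mul_self_eq_one {α : Type*} [Monoid α] {q : α} (hq : q * q = 1)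
    (x y : α) : q * x * q * (q * y * q) = q * (x * y) * q := by
  calc q * x * q * (q * y * q) = q * x * (q * q) * y * q := by simp only [mul_assoc]
    _ = q * (x * y) * q := by rw [hq, mul_one, mul_assoc q x y]

namespace Matrix

variable {m R : Type*} [Fintype m]

theorem mul_apply_nonneg [CommSemiring R] [PartialOrder R] [IsOrderedRing R]
    {M N : Matrix m m R} (hM : ∀ i j, 0 ≤ M i j) (hN : ∀ i j, 0 ≤ N i j) (i j : m) :
    0 ≤ (M * N) i j :=
  Finset.sum_nonneg fun k _ => mul_nonneg (hM i k) (hN k j)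

theorem transpose_conj [CommSemiring R] {Q : Matrix m m R} (hQT : Qᵀ = Q) (M : Matrix m m R) :
    (Q * M * Q)ᵀ = Q * Mᵀ * Q := by
  rw [transpose_mul, transpose_mul, hQT, Matrix.mul_assoc]

variable [DecidableEq m]

/-- The parameter `c` stands for `β²`. -/
def similarityStep [CommSemiring R] (c : R) (M X : Matrix m m R) : Matrix m m R :=
  M * (1 + c • X) * Mᵀ + Mᵀ * (1 + c • X) * M

/-- The similarity iteration `S_k`, started at `S_0 = 0` so that `S_1 = M Mᵀ + Mᵀ M`. -/
def similarityIter [CommSemiring R] (c : R) (M : Matrix m m R) : ℕ → Matrix m m R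
  | 0 => 0
  | k + 1 => similarityStep c M (similarityIter c M k)

theorem eq_similarityIter_of_recurrence [CommSemiring R] {c : R} {M : Matrix m m R}
    {S : ℕ → Matrix m m R} (hS1 : S 1 = M * Mᵀ + Mᵀ * M)
    (hSk : ∀ k, 1 ≤ k → S (k + 1) = similarityStep c M (S k)) :
    ∀ k, 1 ≤ k → S k = similarityIter c M k := by
  intro k hk
  induction k, hk using Nat.le_induction with
  | base => simp [hS1, similarityIter, similarityStep]
  | succ k hk ih => rw [hSk k hk, ih, similarityIter]

theorem similarityIter_apply_nonneg [CommSemiring R] [PartialOrder R] [IsOrderedRing R]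
    {c : R} (hc : 0 ≤ c) {M : Matrix m m R} (hM : ∀ i j, 0 ≤ M i j) (k : ℕ) (i j : m) :
    0 ≤ similarityIter c M k i j := by
  induction k generalizing i j with
  | zero => simp [similarityIter]
  | succ k ih =>
    have hMT (i j : m) : 0 ≤ Mᵀ i j := hM j i
    have hB (i j : m) : 0 ≤ (1 + c • similarityIter c M k) i j :=
      add_nonneg (zero_le_one_elem i j) (mul_nonneg hc (ih i j))
    exact add_nonneg
      (mul_apply_nonneg (mul_apply_nonneg hM hB) hMT i j)
      (mul_apply_nonneg (mul_apply_nonneg hMT hB) hM i j)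

section Conj

variable [CommRing R] {Q : Matrix m m R}

theorem rank_conj_of_mul_self_eq_one (hQ : Q * Q = 1) (M : Matrix m m R) :
    (Q * M * Q).rank = M.rank := by
  have hdet : IsUnit Q.det := isUnit_det_of_right_inverse hQ
  rw [rank_mul_eq_left_of_isUnit_det Q _ hdet, rank_mul_eq_right_of_isUnit_det Q M hdet]

theorem charpoly_conj_of_mul_self_eq_one (hQ : Q * Q = 1) (M : Matrix m m R) :
    (Q * M * Q).charpoly = M.charpoly := by
  rw [Matrix.mul_assoc, charpoly_mul_comm, Matrix.mul_assoc, hQ, Matrix.mul_one]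

theorem similarityStep_conj (hQ : Q * Q = 1) (hQT : Qᵀ = Q) (c : R) (M X : Matrix m m R) :
    similarityStep c (Q * M * Q) (Q * X * Q) = Q * similarityStep c M X * Q := by
  have hB : 1 + c • (Q * X * Q) = Q * (1 + c • X) * Q := by
    rw [Matrix.mul_add, Matrix.add_mul, Matrix.mul_one, hQ, Matrix.mul_smul, Matrix.smul_mul]
  simp only [similarityStep, transpose_conj hQT, hB, conj_mul_conj_of_mul_self_eq_one hQ,
    Matrix.mul_add, Matrix.add_mul]

theorem similarityIter_conj (hQ : Q * Q = 1) (hQT : Qᵀ = Q) (c : R) (M : Matrix m m R)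
    (k : ℕ) : similarityIter c (Q * M * Q) k = Q * similarityIter c M k * Q := by
  induction k with
  | zero => simp [similarityIter]
  | succ k ih => rw [similarityIter, similarityIter, ih, similarityStep_conj hQ hQT]

end Conj

theorem map_abs_conj_of_isDiag [CommRing R] [LinearOrder R] [IsStrictOrderedRing R]
    {Q : Matrix m m R} (hQ : Q.IsDiag) (hQ2 : Q * Q = 1) (M : Matrix m m R) :
    (Q * M * Q).map (fun x => |x|) = M.map (fun x => |x|) := by
  set d := Q.diag
  have hd : Q = diagonal d := hQ.diagonal_diag.symm
  have hd_abs (i : m) : |d i| = 1 := by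
    have hdd : d i * d i = 1 := by
      simpa [hd] using congrFun (congrFun hQ2 i) i
    rcases mul_self_eq_one_iff.mp hdd with h | h <;> simp [h]
  ext i j
  simp [hd, abs_mul, hd_abs]

end Matrix

/-- If `Q` is a diagonal sign matrix (`Q² = I`) with `QAQ = |A|`
(checkerboard pattern), and `S_k`, `S̃_k` are the similarity iterations of `A` and
`|A|` respectively (same `β`), then for every `k ≥ 1`, `S̃_k = Q S_k Q` and
`S̃_k = |S_k|` entrywise; consequently `S_k` and `S̃_k` have the same rank and the same
singular values (equal characteristic polynomials of `M Mᵀ`). -/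
theorem checkerboard_similarity_conjugation (n : ℕ)
    (A Q : Matrix (Fin n) (Fin n) ℝ)
    (hQdiag : Q.IsDiag) (hQ2 : Q * Q = 1)
    (hQAQ : Q * A * Q = A.map (fun x => |x|))
    (β : ℝ)
    (S St : ℕ → Matrix (Fin n) (Fin n) ℝ)
    (hS1 : S 1 = A * Aᵀ + Aᵀ * A)
    (hSk : ∀ k, 1 ≤ k →
      S (k + 1) = A * (1 + β ^ 2 • S k) * Aᵀ + Aᵀ * (1 + β ^ 2 • S k) * A)
    (hSt1 : St 1 = (A.map fun x => |x|) * (A.map fun x => |x|)ᵀ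
      + (A.map fun x => |x|)ᵀ * (A.map fun x => |x|))
    (hStk : ∀ k, 1 ≤ k →
      St (k + 1) = (A.map fun x => |x|) * (1 + β ^ 2 • St k) * (A.map fun x => |x|)ᵀ
        + (A.map fun x => |x|)ᵀ * (1 + β ^ 2 • St k) * (A.map fun x => |x|)) :
    ∀ k, 1 ≤ k →
      St k = Q * S k * Q ∧
      St k = (S k).map (fun x => |x|) ∧
      (St k).rank = (S k).rank ∧
      (St k * (St k)ᵀ).charpoly = (S k * (S k)ᵀ).charpoly := by
  intro k hk
  have hS := eq_similarityIter_of_recurrence hS1 hSk k hk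
  have hSt := eq_similarityIter_of_recurrence hSt1 hStk k hk
  have hconj : St k = Q * S k * Q := by
    rw [hSt, hS, ← hQAQ, similarityIter_conj hQ2 hQdiag.isSymm]
  have hnonneg (i j : Fin n) : 0 ≤ St k i j := by
    rw [hSt]
    exact similarityIter_apply_nonneg (sq_nonneg β) (fun i j => abs_nonneg (A i j)) k i j
  refine ⟨hconj, ?_, ?_, ?_⟩
  · rw [← map_abs_conj_of_isDiag hQdiag hQ2, ← hconj]
    ext i j
    exact (abs_of_nonneg (hnonneg i j)).symm
  · rw [hconj, rank_conj_of_mul_self_eq_one hQ2]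
  · rw [hconj, transpose_conj hQdiag.isSymm, conj_mul_conj_of_mul_self_eq_one hQ2,
      charpoly_conj_of_mul_self_eq_one hQ2]
end

section
/- Let A = Z B Zᵀ where B is a q×q matrix with entries in {0, 1} and Z is an n×q matrix with entries in {0, 1, −1} such that each row of Z has exactly one nonzero entry. Then there exists an n×n diagonal matrix Q with diagonal entries ±1 (so Q² = I) such that QAQ = |A| (entrywise absolute value) and |A| = Z̃ B Z̃ᵀ where Z̃ := QZ has entries in {0, 1} with exactly one entry equal to 1 in each row. -/
open Matrix

/-!
Each row of `Z` is `±` a standard basis row, so `Z = D P` with `D` a diagonal sign matrix and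
`P` the 0/1 matrix of a map `f : Fin n → Fin q`. Then `P B Pᵀ` is the submatrix `B (f i) (f k)`,
which is entrywise nonnegative, and `A = D (P B Pᵀ) D` differs from it only by signs.
Hence `Q := D` works: `Q² = I`, `QZ = P` and `QAQ = P B Pᵀ = |A|`.
-/

namespace Matrix

variable {m n R : Type*}

theorem exists_eq_diagonal_mul_submatrix_one_of_signed_rows [Fintype m] [DecidableEq m]
    [DecidableEq n] [Ring R] {Z : Matrix m n R}
    (hZ : ∀ i j, Z i j = 0 ∨ Z i j = 1 ∨ Z i j = -1) (hZrow : ∀ i, ∃! j, Z i j ≠ 0) :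
    ∃ (ε : m → R) (f : m → n), (∀ i, ε i = 1 ∨ ε i = -1) ∧
      Z = diagonal ε * (1 : Matrix n n R).submatrix f id := by
  choose f hf hfu using hZrow
  refine ⟨fun i => Z i (f i), f, fun i => (hZ i (f i)).resolve_left (hf i), ?_⟩
  ext i j
  rw [diagonal_mul, submatrix_apply, one_apply, id]
  split_ifs with h
  · rw [h, mul_one]
  · rw [mul_zero]
    by_contra hij
    exact h (hfu i j hij).symm

theorem diagonal_mul_diagonal_eq_one_of_sign [Fintype m] [DecidableEq m] [Ring R] {ε : m → R}
    (hε : ∀ i, ε i = 1 ∨ ε i = -1) : diagonal ε * diagonal ε = 1 := by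
  rw [diagonal_mul_diagonal, ← diagonal_one]
  congr 1
  funext i
  rcases hε i with h | h <;> simp [h]

theorem map_abs_diagonal_mul_mul_diagonal [Fintype m] [DecidableEq m] [Ring R] [LinearOrder R]
    [IsStrictOrderedRing R] {ε : m → R} (hε : ∀ i, ε i = 1 ∨ ε i = -1) (M : Matrix m m R) :
    (diagonal ε * M * diagonal ε).map abs = M.map abs := by
  have habs : ∀ i, |ε i| = 1 := fun i => by rcases hε i with h | h <;> simp [h]
  ext i k
  simp [diagonal_mul, mul_diagonal, abs_mul, habs]

theorem submatrix_one_mul_mul_transpose [Fintype n] [DecidableEq n] [NonAssocSemiring R]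
    (f : m → n) (B : Matrix n n R) :
    (1 : Matrix n n R).submatrix f id * B * ((1 : Matrix n n R).submatrix f id)ᵀ =
      B.submatrix f f := by
  have hleft := one_submatrix_mul f (Equiv.refl n) B
  have hright := mul_submatrix_one (Equiv.refl n) f (B.submatrix f id)
  simp only [Equiv.coe_refl, Equiv.refl_symm, Function.id_comp] at hleft hright
  rw [transpose_submatrix, transpose_one, hleft, hright, submatrix_submatrix]
  rfl

theorem submatrix_one_apply_eq_one_iff [DecidableEq n] [Zero R] [One R] [NeZero (1 : R)]
    (f : m → n) (i : m) (j : n) : (1 : Matrix n n R).submatrix f id i j = 1 ↔ f i = j := by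
  simp [one_apply]

end Matrix

/-- If `A = Z B Zᵀ` with `B ∈ {0,1}^{q×q}` and `Z ∈ {0,1,−1}^{n×q}`
having exactly one nonzero entry per row, then there is a diagonal sign matrix `Q`
(diagonal entries `±1`, so `Q² = I`) with `QAQ = |A|` and `|A| = (QZ) B (QZ)ᵀ`, where
`Z̃ := QZ` has entries in `{0,1}` with exactly one `1` in each row. -/
theorem signed_ideal_to_unsigned_ideal (n q : ℕ)
    (B : Matrix (Fin q) (Fin q) ℝ) (hB : ∀ i j, B i j = 0 ∨ B i j = 1)
    (Z : Matrix (Fin n) (Fin q) ℝ)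
    (hZ : ∀ i j, Z i j = 0 ∨ Z i j = 1 ∨ Z i j = -1)
    (hZrow : ∀ i, ∃! j, Z i j ≠ 0)
    (A : Matrix (Fin n) (Fin n) ℝ) (hA : A = Z * B * Zᵀ) :
    ∃ Q : Matrix (Fin n) (Fin n) ℝ,
      Q.IsDiag ∧ (∀ i, Q i i = 1 ∨ Q i i = -1) ∧ Q * Q = 1 ∧
      Q * A * Q = A.map (fun x => |x|) ∧
      A.map (fun x => |x|) = (Q * Z) * B * (Q * Z)ᵀ ∧
      (∀ i j, (Q * Z) i j = 0 ∨ (Q * Z) i j = 1) ∧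
      (∀ i, ∃! j, (Q * Z) i j = 1) := by
  obtain ⟨ε, f, hε, rfl⟩ := exists_eq_diagonal_mul_submatrix_one_of_signed_rows hZ hZrow
  set P : Matrix (Fin n) (Fin q) ℝ := (1 : Matrix (Fin q) (Fin q) ℝ).submatrix f id
  have hQQ := diagonal_mul_diagonal_eq_one_of_sign hε
  have hQZ : diagonal ε * (diagonal ε * P) = P := by rw [← Matrix.mul_assoc, hQQ, Matrix.one_mul]
  have hPBP : P * B * Pᵀ = B.submatrix f f := submatrix_one_mul_mul_transpose f B
  have hA' : A = diagonal ε * B.submatrix f f * diagonal ε := by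
    rw [hA, ← hPBP, transpose_mul, diagonal_transpose]
    simp only [Matrix.mul_assoc]
  have habs : A.map (fun x => |x|) = B.submatrix f f := by
    rw [hA', map_abs_diagonal_mul_mul_diagonal hε]
    ext i k
    rcases hB (f i) (f k) with h | h <;> simp [h]
  have hQAQ : diagonal ε * A * diagonal ε = B.submatrix f f := by
    calc diagonal ε * A * diagonal ε
        = (diagonal ε * diagonal ε) * B.submatrix f f * (diagonal ε * diagonal ε) := by
          rw [hA']; simp only [Matrix.mul_assoc]
      _ = B.submatrix f f := by rw [hQQ, Matrix.one_mul, Matrix.mul_one]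
  have hP : ∀ i j, P i j = 1 ↔ f i = j := submatrix_one_apply_eq_one_iff f
  refine ⟨diagonal ε, isDiag_diagonal ε, by simpa using hε, hQQ, hQAQ.trans habs.symm,
    by rw [hQZ, hPBP, habs], fun i j => ?_, fun i => ?_⟩
  · rw [hQZ]
    exact (ite_eq_or_eq _ _ _).symm
  · rw [hQZ]
    exact ⟨f i, (hP i (f i)).2 rfl, fun j hj => ((hP i j).1 hj).symm⟩
end

section
/- Let A be an n×n real matrix, D an invertible n×n diagonal matrix, A_W := D A D, and β ∈ ℝ. Let S_k be the similarity iteration for A, and define S_k^D := D S_k D. Then the matrices S_k^D satisfy the weighted recurrences S_1^D = A_W D^{−2} A_Wᵀ + A_Wᵀ D^{−2} A_W and S_{k+1}^D = A_W (D^{−2} + β² D^{−2} S_k^D D^{−2}) A_Wᵀ + A_Wᵀ (D^{−2} + β² D^{−2} S_k^D D^{−2}) A_W, and rank(S_k^D) = rank(S_k) for every k ≥ 1. -/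
open Matrix

/-!
Congruence by the symmetric invertible `D` intertwines the two iterations: in
`A_W (D⁻¹ M D⁻¹) A_Wᵀ = D A D D⁻¹ M D⁻¹ D Aᵀ D` the inner factors cancel, leaving `D (A M Aᵀ) D`,
and `D⁻¹ (1 + β² S_k) D⁻¹` is exactly the middle factor of the weighted recurrence.
Congruence by an invertible matrix preserves rank.
-/

namespace Matrix

variable {ι R : Type*} [Fintype ι] [CommRing R] {D : Matrix ι ι R}

theorem transpose_mul_mul_of_isSymm (hD : D.IsSymm) (A : Matrix ι ι R) :
    (D * A * D)ᵀ = D * Aᵀ * D := by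
  rw [transpose_mul, transpose_mul, hD.eq, mul_assoc]

variable [DecidableEq ι]

theorem mul_mul_nonsing_inv_mul_mul (hD : IsUnit D.det) (X M Y : Matrix ι ι R) :
    D * X * D * (D⁻¹ * M * D⁻¹) * (D * Y * D) = D * (X * M * Y) * D := by
  calc D * X * D * (D⁻¹ * M * D⁻¹) * (D * Y * D)
      = D * X * ((D * D⁻¹) * M * (D⁻¹ * D)) * Y * D := by simp only [mul_assoc]
    _ = D * (X * M * Y) * D := by
      rw [mul_nonsing_inv D hD, nonsing_inv_mul D hD]; simp only [mul_one, one_mul, mul_assoc]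

theorem nonsing_inv_sq_mul_mul_nonsing_inv_sq (hD : IsUnit D.det) (S : Matrix ι ι R) :
    D⁻¹ * D⁻¹ * (D * S * D) * (D⁻¹ * D⁻¹) = D⁻¹ * S * D⁻¹ := by
  calc D⁻¹ * D⁻¹ * (D * S * D) * (D⁻¹ * D⁻¹)
      = D⁻¹ * ((D⁻¹ * D) * S * (D * D⁻¹)) * D⁻¹ := by simp only [mul_assoc]
    _ = D⁻¹ * S * D⁻¹ := by
      rw [mul_nonsing_inv D hD, nonsing_inv_mul D hD, one_mul, mul_one]

theorem rank_mul_mul_of_isUnit_det (hD : IsUnit D.det) (X : Matrix ι ι R) :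
    (D * X * D).rank = X.rank := by
  rw [rank_mul_eq_left_of_isUnit_det D _ hD, rank_mul_eq_right_of_isUnit_det D _ hD]

theorem mul_add_mul_mul_eq_of_isSymm (hD : IsUnit D.det) (hDs : D.IsSymm) (A M : Matrix ι ι R) :
    D * (A * M * Aᵀ + Aᵀ * M * A) * D
      = D * A * D * (D⁻¹ * M * D⁻¹) * (D * A * D)ᵀ
        + (D * A * D)ᵀ * (D⁻¹ * M * D⁻¹) * (D * A * D) := by
  rw [transpose_mul_mul_of_isSymm hDs, mul_mul_nonsing_inv_mul_mul hD,
    mul_mul_nonsing_inv_mul_mul hD, mul_add, add_mul]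

end Matrix

/-- For an invertible diagonal `D`, weighted adjacency `A_W := D A D`,
and `S_k` the similarity iteration for `A`, the scaled matrices `S_k^D := D S_k D`
satisfy the weighted recurrences
`S₁^D = A_W D⁻² A_Wᵀ + A_Wᵀ D⁻² A_W`,
`S_{k+1}^D = A_W (D⁻² + β² D⁻² S_k^D D⁻²) A_Wᵀ + A_Wᵀ (D⁻² + β² D⁻² S_k^D D⁻²) A_W`,
and `rank S_k^D = rank S_k` for every `k ≥ 1`. -/
theorem weighted_similarity_recurrence (n : ℕ)
    (A D : Matrix (Fin n) (Fin n) ℝ)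
    (hDdiag : D.IsDiag) (hDinv : IsUnit D.det)
    (AW : Matrix (Fin n) (Fin n) ℝ) (hAW : AW = D * A * D)
    (β : ℝ)
    (S : ℕ → Matrix (Fin n) (Fin n) ℝ)
    (hS1 : S 1 = A * Aᵀ + Aᵀ * A)
    (hSk : ∀ k, 1 ≤ k →
      S (k + 1) = A * (1 + β ^ 2 • S k) * Aᵀ + Aᵀ * (1 + β ^ 2 • S k) * A)
    (SD : ℕ → Matrix (Fin n) (Fin n) ℝ)
    (hSD : ∀ k, SD k = D * S k * D) :
    SD 1 = AW * (D⁻¹ * D⁻¹) * AWᵀ + AWᵀ * (D⁻¹ * D⁻¹) * AW ∧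
    (∀ k, 1 ≤ k →
      SD (k + 1)
        = AW * (D⁻¹ * D⁻¹ + β ^ 2 • (D⁻¹ * D⁻¹ * SD k * (D⁻¹ * D⁻¹))) * AWᵀ
          + AWᵀ * (D⁻¹ * D⁻¹ + β ^ 2 • (D⁻¹ * D⁻¹ * SD k * (D⁻¹ * D⁻¹))) * AW) ∧
    ∀ k, 1 ≤ k → (SD k).rank = (S k).rank := by
  subst hAW
  have step := mul_add_mul_mul_eq_of_isSymm hDinv hDdiag.isSymm A
  have hmid (k : ℕ) : D⁻¹ * D⁻¹ + β ^ 2 • (D⁻¹ * D⁻¹ * SD k * (D⁻¹ * D⁻¹))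
      = D⁻¹ * (1 + β ^ 2 • S k) * D⁻¹ := by
    rw [hSD, nonsing_inv_sq_mul_mul_nonsing_inv_sq hDinv, mul_add, add_mul, mul_one,
      Matrix.mul_smul, Matrix.smul_mul]
  refine ⟨?_, fun k hk => ?_, fun k _ => ?_⟩
  · simpa only [hSD, hS1, mul_one] using step 1
  · rw [hmid, hSD, hSk k hk, step]
  · rw [hSD, rank_mul_mul_of_isUnit_det hDinv]
end
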